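/- arXiv:1705.00023 — 2 statements merged into one kernel-verified Lean document; each statement's English description precedes it below -/
import Mathlib

section
/- With h as defined in the paper, for every A ∈ gl(2,ℝ), v ∈ ℝ, u,y ∈ ℝ², the matrix commutator satisfies [h(A,0,0,0), h(0,v,u,y)] = h(0, (tr A)·v, A·u, (A + (tr A)·I)·y), where A·u denotes matrix-vector multiplication and I is the 2×2 identity. -/
noncomputable section

open Real

/-- The matrix `h(A,v,u,y)` from the paper (0-indexed entries of `A`, `u`, `y`). -/
def hMat (A : Matrix (Fin 2) (Fin 2) ℝ) (v : ℝ) (u y : Fin 2 → ℝ) :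
    Matrix (Fin 7) (Fin 7) ℝ :=
  !![A.trace, -u 1, u 0, Real.sqrt 2 * v, 0, -y 0, -y 1;
     0, A 0 0, A 0 1, Real.sqrt 2 * u 0, y 0, 0, v;
     0, A 1 0, A 1 1, Real.sqrt 2 * u 1, y 1, -v, 0;
     0, 0, 0, 0, Real.sqrt 2 * v, Real.sqrt 2 * u 0, Real.sqrt 2 * u 1;
     0, 0, 0, 0, -A.trace, 0, 0;
     0, 0, 0, 0, u 1, -A 0 0, -A 1 0;
     0, 0, 0, 0, -u 0, -A 0 1, -A 1 1]

lemma cv_1_0 {α : Type*} (x : α) (t : Fin 1 → α) : Matrix.vecCons x t (0 : Fin 2) = x := rfl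
lemma cv_1_1 {α : Type*} (x : α) (t : Fin 1 → α) : Matrix.vecCons x t (1 : Fin 2) = t 0 := rfl
lemma cv_2_0 {α : Type*} (x : α) (t : Fin 2 → α) : Matrix.vecCons x t (0 : Fin 3) = x := rfl
lemma cv_2_1 {α : Type*} (x : α) (t : Fin 2 → α) : Matrix.vecCons x t (1 : Fin 3) = t 0 := rfl
lemma cv_2_2 {α : Type*} (x : α) (t : Fin 2 → α) : Matrix.vecCons x t (2 : Fin 3) = t 1 := rfl
lemma cv_3_0 {α : Type*} (x : α) (t : Fin 3 → α) : Matrix.vecCons x t (0 : Fin 4) = x := rfl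
lemma cv_3_1 {α : Type*} (x : α) (t : Fin 3 → α) : Matrix.vecCons x t (1 : Fin 4) = t 0 := rfl
lemma cv_3_2 {α : Type*} (x : α) (t : Fin 3 → α) : Matrix.vecCons x t (2 : Fin 4) = t 1 := rfl
lemma cv_3_3 {α : Type*} (x : α) (t : Fin 3 → α) : Matrix.vecCons x t (3 : Fin 4) = t 2 := rfl
lemma cv_4_0 {α : Type*} (x : α) (t : Fin 4 → α) : Matrix.vecCons x t (0 : Fin 5) = x := rfl
lemma cv_4_1 {α : Type*} (x : α) (t : Fin 4 → α) : Matrix.vecCons x t (1 : Fin 5) = t 0 := rfl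
lemma cv_4_2 {α : Type*} (x : α) (t : Fin 4 → α) : Matrix.vecCons x t (2 : Fin 5) = t 1 := rfl
lemma cv_4_3 {α : Type*} (x : α) (t : Fin 4 → α) : Matrix.vecCons x t (3 : Fin 5) = t 2 := rfl
lemma cv_4_4 {α : Type*} (x : α) (t : Fin 4 → α) : Matrix.vecCons x t (4 : Fin 5) = t 3 := rfl
lemma cv_5_0 {α : Type*} (x : α) (t : Fin 5 → α) : Matrix.vecCons x t (0 : Fin 6) = x := rfl
lemma cv_5_1 {α : Type*} (x : α) (t : Fin 5 → α) : Matrix.vecCons x t (1 : Fin 6) = t 0 := rfl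
lemma cv_5_2 {α : Type*} (x : α) (t : Fin 5 → α) : Matrix.vecCons x t (2 : Fin 6) = t 1 := rfl
lemma cv_5_3 {α : Type*} (x : α) (t : Fin 5 → α) : Matrix.vecCons x t (3 : Fin 6) = t 2 := rfl
lemma cv_5_4 {α : Type*} (x : α) (t : Fin 5 → α) : Matrix.vecCons x t (4 : Fin 6) = t 3 := rfl
lemma cv_5_5 {α : Type*} (x : α) (t : Fin 5 → α) : Matrix.vecCons x t (5 : Fin 6) = t 4 := rfl
lemma cv_6_0 {α : Type*} (x : α) (t : Fin 6 → α) : Matrix.vecCons x t (0 : Fin 7) = x := rfl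
lemma cv_6_1 {α : Type*} (x : α) (t : Fin 6 → α) : Matrix.vecCons x t (1 : Fin 7) = t 0 := rfl
lemma cv_6_2 {α : Type*} (x : α) (t : Fin 6 → α) : Matrix.vecCons x t (2 : Fin 7) = t 1 := rfl
lemma cv_6_3 {α : Type*} (x : α) (t : Fin 6 → α) : Matrix.vecCons x t (3 : Fin 7) = t 2 := rfl
lemma cv_6_4 {α : Type*} (x : α) (t : Fin 6 → α) : Matrix.vecCons x t (4 : Fin 7) = t 3 := rfl
lemma cv_6_5 {α : Type*} (x : α) (t : Fin 6 → α) : Matrix.vecCons x t (5 : Fin 7) = t 4 := rfl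
lemma cv_6_6 {α : Type*} (x : α) (t : Fin 6 → α) : Matrix.vecCons x t (6 : Fin 7) = t 5 := rfl

set_option maxHeartbeats 4000000 in
/-- [h(A,0,0,0), h(0,v,u,y)] = h(0, (tr A)v, Au, (A + (tr A)I)y). -/
theorem bracket_gl2_m (A : Matrix (Fin 2) (Fin 2) ℝ) (v : ℝ) (u y : Fin 2 → ℝ) :
    hMat A 0 0 0 * hMat 0 v u y - hMat 0 v u y * hMat A 0 0 0 =
      hMat 0 (A.trace * v) (A.mulVec u) (fun i => A.mulVec y i + A.trace * y i) := by
  ext i j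
  fin_cases i <;> fin_cases j <;>
    · simp only [Fin.reduceFinMk, hMat, Matrix.sub_apply, Matrix.mul_apply, Fin.sum_univ_seven, Matrix.of_apply,
        Matrix.cons_val', Matrix.cons_val_fin_one, Matrix.empty_val',
        cv_1_0, cv_1_1, cv_2_0, cv_2_1, cv_2_2, cv_3_0, cv_3_1, cv_3_2, cv_3_3, cv_4_0, cv_4_1, cv_4_2, cv_4_3, cv_4_4, cv_5_0, cv_5_1, cv_5_2, cv_5_3, cv_5_4, cv_5_5, cv_6_0, cv_6_1, cv_6_2, cv_6_3, cv_6_4, cv_6_5, cv_6_6,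
        Matrix.trace_zero, Matrix.zero_apply, Pi.zero_apply, Matrix.mulVec, dotProduct,
        Fin.sum_univ_two, Matrix.trace_fin_two]
      ring
end
end

section
/- The subspaces 𝔪(1,0,0) = {h(0,v,0,0)}, 𝔪(0,0,2) = {h(0,0,0,y) : y ∈ ℝ²} of 𝔪 ⊂ gl(7,ℝ) satisfy: [𝔪,𝔪] ⊆ 𝔪(1,0,0) ⊕ 𝔪(0,0,2), [𝔪, 𝔪(1,0,0) ⊕ 𝔪(0,0,2)] ⊆ 𝔪(0,0,2), and [𝔪, 𝔪(0,0,2)] = 0, where brackets are matrix commutators and 𝔪 = {h(0,v,u,y) : v ∈ ℝ, u,y ∈ ℝ²}. -/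
noncomputable section

open Real

def mSet : Set (Matrix (Fin 7) (Fin 7) ℝ) :=
  {M | ∃ (v : ℝ) (u y : Fin 2 → ℝ), M = hMat 0 v u y}

lemma commutator_hMat (v w : ℝ) (u y p z : Fin 2 → ℝ) :
    hMat 0 v u y * hMat 0 w p z - hMat 0 w p z * hMat 0 v u y
      = hMat 0 (2 * (u 0 * p 1 - u 1 * p 0)) 0 (3 • (w • u - v • p)) := by
  have sqrt_two_sq : √2 ^ 2 = 2 := Real.sq_sqrt zero_le_two
  ext i j
  simp only [Matrix.sub_apply, Matrix.mul_apply, Fin.sum_univ_seven]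
  fin_cases i <;> fin_cases j <;> simp [hMat] <;> ring_nf <;> simp only [sqrt_two_sq] <;> ring

@[simp] lemma hMat_zero : hMat 0 0 0 0 = 0 := by
  ext i j
  fin_cases i <;> fin_cases j <;> simp [hMat]

/-- Lower central series of 𝔪: [𝔪,𝔪] ⊆ 𝔪(1,0,0) ⊕ 𝔪(0,0,2),
[𝔪, 𝔪(1,0,0) ⊕ 𝔪(0,0,2)] ⊆ 𝔪(0,0,2), and [𝔪, 𝔪(0,0,2)] = 0. -/
theorem m_lower_central_series :
    (∀ X ∈ mSet, ∀ Y ∈ mSet, ∃ (v : ℝ) (y : Fin 2 → ℝ),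
      X * Y - Y * X = hMat 0 v 0 y) ∧
    (∀ X ∈ mSet, ∀ (v : ℝ) (y : Fin 2 → ℝ), ∃ y' : Fin 2 → ℝ,
      X * hMat 0 v 0 y - hMat 0 v 0 y * X = hMat 0 0 0 y') ∧
    (∀ X ∈ mSet, ∀ y : Fin 2 → ℝ,
      X * hMat 0 0 0 y - hMat 0 0 0 y * X = 0) := by
  refine ⟨?_, ?_, ?_⟩
  · rintro _ ⟨v, u, y, rfl⟩ _ ⟨w, p, z, rfl⟩
    exact ⟨_, _, commutator_hMat v w u y p z⟩
  · rintro _ ⟨v, u, y, rfl⟩ w z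
    exact ⟨3 • w • u, by simpa using commutator_hMat v w u y 0 z⟩
  · rintro _ ⟨v, u, y, rfl⟩ z
    simpa using commutator_hMat v 0 u y 0 z
end
end
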